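/- Let (Ω₁,𝓕₁) and (Ω₂,𝓕₂) be standard Borel spaces, P a probability measure on Ω₁, and f : Ω₂ → Ω₁ a Borel measurable surjection. Then there exists a measurable map g : Ω₁ → Ω₂, defined P-almost everywhere, such that f(g(ω)) = ω for P-a.e. ω ∈ Ω₁. -/

import Mathlib

/-!
Composing `f` with a continuous surjection from Baire space `ℕ → ℕ` (continuous for a finer Polish
topology on `Ω₂`) gives a continuous surjection `F : (ℕ → ℕ) → Ω₁`. For compact `K ⊆ ℕ → ℕ`, the
lexicographically least point of `K ∩ F ⁻¹' {ω}` depends measurably on `ω`: the events "this fibre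
meets a cylinder" are images of compact sets under `F`, hence closed. A capacity argument (bounding
the coordinates one at a time, then using outer regularity of `P`) shows that countably many images
`F '' K` cover `Ω₁` up to a `P`-null set, and the selectors on these pieces glue to `g`.
-/

open MeasureTheory Set PiNat
open scoped ENNReal

namespace PiNat

variable {E : ℕ → Type*}

theorem mem_cylinder_succ {x y : ∀ n, E n} {k : ℕ} :
    y ∈ PiNat.cylinder x (k + 1) ↔ y ∈ PiNat.cylinder x k ∧ y k = x k := by
  simp only [mem_cylinder_iff, Nat.lt_succ_iff_lt_or_eq, or_imp, forall_and, forall_eq]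

theorem isClosed_cylinder [∀ n, TopologicalSpace (E n)] [∀ n, T1Space (E n)] (x : ∀ n, E n)
    (k : ℕ) : IsClosed (PiNat.cylinder x k) := by
  rw [cylinder_eq_pi]
  exact isClosed_set_pi fun _ _ => isClosed_singleton

end PiNat

namespace MeasurableSelector

-- The lexicographically least point of `A` when `A` is closed and nonempty.
noncomputable def leftmost (A : Set (ℕ → ℕ)) (k : ℕ) : ℕ :=
  sInf ((· k) '' (A ∩ {y | ∀ i (_ : i < k), y i = leftmost A i}))

theorem leftmost_apply (A : Set (ℕ → ℕ)) (k : ℕ) :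
    leftmost A k = sInf ((· k) '' (A ∩ PiNat.cylinder (leftmost A) k)) := by
  rw [leftmost]; rfl

theorem inter_cylinder_leftmost_nonempty {A : Set (ℕ → ℕ)} (hA : A.Nonempty) (k : ℕ) :
    (A ∩ PiNat.cylinder (leftmost A) k).Nonempty := by
  induction k with
  | zero => simpa [cylinder_zero] using hA
  | succ k ih =>
    obtain ⟨y, ⟨hyA, hyk⟩, hy⟩ := Nat.sInf_mem (ih.image (· k))
    rw [← leftmost_apply] at hy
    exact ⟨y, hyA, mem_cylinder_succ.2 ⟨hyk, hy⟩⟩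

theorem leftmost_mem {A : Set (ℕ → ℕ)} (hA : IsClosed A) (hne : A.Nonempty) : leftmost A ∈ A := by
  by_contra h
  obtain ⟨k, hk⟩ := exists_disjoint_cylinder hA h
  exact (inter_cylinder_leftmost_nonempty hne k).ne_empty hk.inter_eq

theorem measurable_of_measurableSet_preimage_cylinder {Ω : Type*} [MeasurableSpace Ω]
    {f : Ω → ℕ → ℕ} (hf : ∀ x k, MeasurableSet (f ⁻¹' PiNat.cylinder x k)) : Measurable f := by
  rw [BorelSpace.measurable_eq (α := ℕ → ℕ),
    (isTopologicalBasis_cylinders fun _ => ℕ).borel_eq_generateFrom]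
  exact measurable_generateFrom fun _ ⟨x, k, hs⟩ => hs ▸ hf x k

theorem measurable_nat_sInf {Ω : Type*} [MeasurableSpace Ω] {T : Ω → Set ℕ}
    (hT : ∀ n, MeasurableSet {ω | n ∈ T ω}) : Measurable fun ω => sInf (T ω) := by
  refine measurable_of_Iic fun n => ?_
  have : (fun ω => sInf (T ω)) ⁻¹' Iic n = (⋂ m, {ω | m ∈ T ω}ᶜ) ∪ ⋃ m ≤ n, {ω | m ∈ T ω} := by
    ext ω
    rcases (T ω).eq_empty_or_nonempty with h | h
    · simp [h]
    · simp only [mem_preimage, mem_Iic, mem_union, mem_iInter, mem_compl_iff, mem_ofPred_eq,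
        mem_iUnion, exists_prop]
      refine ⟨fun hn => Or.inr ⟨_, hn, Nat.sInf_mem h⟩, ?_⟩
      rintro (h' | ⟨m, hmn, hm⟩)
      · exact absurd (Nat.sInf_mem h) (h' _)
      · exact (Nat.sInf_le hm).trans hmn
  rw [this]
  exact (MeasurableSet.iInter fun m => (hT m).compl).union
    (MeasurableSet.biUnion (to_countable _) fun m _ => hT m)

theorem mem_image_apply_inter_cylinder_iff {A : Set (ℕ → ℕ)} {x : ℕ → ℕ} {k n : ℕ} :
    n ∈ (· k) '' (A ∩ PiNat.cylinder x k) ↔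
      (A ∩ PiNat.cylinder (Function.update x k n) (k + 1)).Nonempty := by
  have hcyl : PiNat.cylinder (Function.update x k n) k = PiNat.cylinder x k :=
    mem_cylinder_iff_eq.1 (update_mem_cylinder x k n)
  simp only [Set.Nonempty, mem_image, mem_inter_iff, mem_cylinder_succ, hcyl,
    Function.update_self, and_assoc]

theorem measurable_leftmost {Ω : Type*} [MeasurableSpace Ω] {A : Ω → Set (ℕ → ℕ)}
    (hA : ∀ x k, MeasurableSet {ω | (A ω ∩ PiNat.cylinder x k).Nonempty}) :
    Measurable fun ω => leftmost (A ω) := by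
  refine measurable_of_measurableSet_preimage_cylinder fun x k => ?_
  induction k with
  | zero => simp [cylinder_zero]
  | succ k ih =>
    have hstep : MeasurableSet {ω | sInf ((· k) '' (A ω ∩ PiNat.cylinder x k)) = x k} :=
      measurable_nat_sInf (fun n => by simpa only [mem_image_apply_inter_cylinder_iff] using hA _ _)
        (measurableSet_singleton (x k))
    convert ih.inter hstep using 1
    ext ω
    simp only [mem_preimage, mem_inter_iff, mem_ofPred_eq, mem_cylinder_succ]
    refine and_congr_right fun h => ?_
    rw [leftmost_apply, mem_cylinder_iff_eq.1 h]

theorem isCompact_forall_le (N : ℕ → ℕ) : IsCompact {x : ℕ → ℕ | ∀ i, x i ≤ N i} := by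
  simpa [Set.pi, Iic] using isCompact_univ_pi fun i => (finite_Iic (N i)).isCompact

theorem exists_forall_lt_le_subset_of_isOpen {N : ℕ → ℕ} {W : Set (ℕ → ℕ)} (hW : IsOpen W)
    (hNW : {x | ∀ i, x i ≤ N i} ⊆ W) : ∃ k, {x | ∀ i < k, x i ≤ N i} ⊆ W := by
  set V : ℕ → Set (ℕ → ℕ) := fun k => {x | PiNat.cylinder x k ⊆ W}
  have hVopen : ∀ k, IsOpen (V k) := fun k => isOpen_iff_forall_mem_open.2 fun x hx =>
    ⟨PiNat.cylinder x k, fun y hy => show _ ⊆ W by rwa [mem_cylinder_iff_eq.1 hy],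
      isOpen_cylinder _ x k, self_mem_cylinder x k⟩
  have hWV : W ⊆ ⋃ k, V k := fun x hx => by
    obtain ⟨_, ⟨y, k, rfl⟩, hxy, hyW⟩ :=
      (isTopologicalBasis_cylinders fun _ => ℕ).exists_subset_of_mem_open hx hW
    exact mem_iUnion.2 ⟨k, show _ ⊆ W by rwa [mem_cylinder_iff_eq.1 hxy]⟩
  obtain ⟨k, hk⟩ := (isCompact_forall_le N).elim_directed_cover V hVopen (hNW.trans hWV)
    (Monotone.directed_le fun _ _ h _ hx => (cylinder_anti _ h).trans hx)
  -- Clipping `x` at `N` lands in the compact set without changing the first `k` coordinates.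
  refine ⟨k, fun x hx => hk (fun i => min_le_right (x i) (N i)) ?_⟩
  exact fun i hi => (min_eq_left (hx i hi)).symm

theorem exists_measure_iUnion_le_add_of_monotone {α : Type*} [MeasurableSpace α] {μ : Measure α}
    {s : ℕ → Set α} (hs : Monotone s) (hfin : μ (⋃ n, s n) ≠ ∞) {ε : ℝ≥0∞} (hε : ε ≠ 0) :
    ∃ n, μ (⋃ n, s n) ≤ μ (s n) + ε := by
  rcases eq_or_ne (μ (⋃ n, s n)) 0 with h0 | h0
  · exact ⟨0, by simp [h0]⟩
  obtain ⟨n, hn⟩ := ((tendsto_order.1 (tendsto_measure_iUnion_atTop hs)).1 _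
    (ENNReal.sub_lt_self hfin h0 hε)).exists
  exact ⟨n, tsub_le_iff_right.1 hn.le⟩

theorem exists_measure_image_le_measure_image_inter_add {Ω : Type*} [MeasurableSpace Ω]
    (μ : Measure Ω) [IsFiniteMeasure μ] (G : (ℕ → ℕ) → Ω) (A : Set (ℕ → ℕ)) (k : ℕ)
    {ε : ℝ≥0∞} (hε : ε ≠ 0) : ∃ m, μ (G '' A) ≤ μ (G '' (A ∩ {x | x k ≤ m})) + ε := by
  have hA : G '' A = ⋃ m, G '' (A ∩ {x : ℕ → ℕ | x k ≤ m}) := by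
    rw [← image_iUnion, ← inter_iUnion, iUnion_eq_univ_iff.2 fun x => ⟨x k, le_refl (x k)⟩,
      inter_univ]
  rw [hA]
  exact exists_measure_iUnion_le_add_of_monotone (s := fun m => G '' (A ∩ {x | x k ≤ m}))
    (fun a b hab => image_mono (inter_subset_inter_right _ fun x hx => le_trans hx hab))
    (measure_ne_top μ _) hε

theorem exists_isCompact_measure_range_le_add {Ω : Type*} [TopologicalSpace Ω] [MeasurableSpace Ω]
    (μ : Measure Ω) [IsFiniteMeasure μ] [μ.OuterRegular] {G : (ℕ → ℕ) → Ω} (hG : Continuous G)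
    {ε : ℝ≥0∞} (hε : ε ≠ 0) : ∃ K, IsCompact K ∧ μ (range G) ≤ μ (G '' K) + ε := by
  obtain ⟨δ, hδpos, hδε⟩ := ENNReal.exists_pos_sum_of_countable' hε ℕ
  choose bound hbound using fun A k =>
    exists_measure_image_le_measure_image_inter_add μ G A k (hδpos (k + 1)).ne'
  let S : ℕ → Set (ℕ → ℕ) := fun k => Nat.rec univ (fun k S => S ∩ {x | x k ≤ bound S k}) k
  let N : ℕ → ℕ := fun k => bound (S k) k
  have hS : ∀ k, S k = {x | ∀ i < k, x i ≤ N i} := by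
    intro k
    induction k with
    | zero => simp [S]
    | succ k ih =>
      change S k ∩ {x | x k ≤ N k} = _
      ext x
      simp only [ih, mem_inter_iff, mem_ofPred_eq, Nat.lt_succ_iff_lt_or_eq, or_imp, forall_and,
        forall_eq]
  have hmeasure : ∀ k, μ (range G) ≤ μ (G '' S k) + ∑ i ∈ Finset.range k, δ (i + 1) := by
    intro k
    induction k with
    | zero => simp [S, image_univ]
    | succ k ih =>
      calc μ (range G) ≤ μ (G '' S k) + ∑ i ∈ Finset.range k, δ (i + 1) := ih
        _ ≤ μ (G '' S (k + 1)) + δ (k + 1) + ∑ i ∈ Finset.range k, δ (i + 1) := by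
          gcongr; exact hbound (S k) k
        _ = μ (G '' S (k + 1)) + ∑ i ∈ Finset.range (k + 1), δ (i + 1) := by
          rw [Finset.sum_range_succ]; ring
  obtain ⟨U, hKU, hU, hUlt⟩ := (G '' {x | ∀ i, x i ≤ N i}).exists_isOpen_lt_of_lt _
    (ENNReal.lt_add_right (measure_ne_top μ _) (hδpos 0).ne')
  obtain ⟨k, hk⟩ := exists_forall_lt_le_subset_of_isOpen (hU.preimage hG) (image_subset_iff.1 hKU)
  refine ⟨_, isCompact_forall_le N, ?_⟩
  calc μ (range G) ≤ μ (G '' S k) + ∑ i ∈ Finset.range k, δ (i + 1) := hmeasure k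
    _ ≤ μ U + ∑ i ∈ Finset.range k, δ (i + 1) := by
      gcongr
      rw [hS, image_subset_iff]
      exact hk
    _ ≤ μ (G '' {x | ∀ i, x i ≤ N i}) + δ 0 + ∑ i ∈ Finset.range k, δ (i + 1) := by
      gcongr
    _ = μ (G '' {x | ∀ i, x i ≤ N i}) + ∑ i ∈ Finset.range (k + 1), δ i := by
      rw [Finset.sum_range_succ']; ring
    _ ≤ μ (G '' {x | ∀ i, x i ≤ N i}) + ε := by
      gcongr
      exact (ENNReal.sum_le_tsum _).trans hδε.le

section Selector

variable {Ω : Type*} [TopologicalSpace Ω] [T2Space Ω] [MeasurableSpace Ω] [OpensMeasurableSpace Ω]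

theorem exists_isCompact_measure_range_diff_eq_zero (μ : Measure Ω) [IsFiniteMeasure μ]
    [μ.OuterRegular] {G : (ℕ → ℕ) → Ω} (hG : Continuous G) :
    ∃ K : ℕ → Set (ℕ → ℕ), (∀ n, IsCompact (K n)) ∧ μ (range G \ ⋃ n, G '' K n) = 0 := by
  choose K hK hle using fun n : ℕ =>
    exists_isCompact_measure_range_le_add μ hG (ENNReal.inv_ne_zero.2 (ENNReal.natCast_ne_top n))
  refine ⟨K, hK, nonpos_iff_eq_zero.1 ?_⟩
  have hB : MeasurableSet (⋃ n, G '' K n) :=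
    .iUnion fun n => ((hK n).image hG).isClosed.measurableSet
  refine ge_of_tendsto' ENNReal.tendsto_inv_nat_nhds_zero fun n => ?_
  refine (ENNReal.add_le_add_iff_right (measure_ne_top μ (G '' K n))).1 ?_
  calc μ (range G \ ⋃ n, G '' K n) + μ (G '' K n)
      ≤ μ (range G \ ⋃ n, G '' K n) + μ (range G ∩ ⋃ n, G '' K n) := by
        gcongr
        exact subset_inter (image_subset_range G _) (subset_iUnion (fun n => G '' K n) n)
    _ = μ (range G) := measure_sdiff_add_inter _ hB
    _ ≤ μ (G '' K n) + (n : ℝ≥0∞)⁻¹ := hle n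
    _ = (n : ℝ≥0∞)⁻¹ + μ (G '' K n) := add_comm _ _

theorem exists_measurable_rightInvOn_image {F : (ℕ → ℕ) → Ω} (hF : Continuous F)
    {K : Set (ℕ → ℕ)} (hK : IsCompact K) :
    ∃ s : Ω → ℕ → ℕ, Measurable s ∧ RightInvOn s F (F '' K) := by
  refine ⟨fun ω => leftmost (K ∩ F ⁻¹' {ω}), measurable_leftmost fun x k => ?_, ?_⟩
  · have : {ω | (K ∩ F ⁻¹' {ω} ∩ PiNat.cylinder x k).Nonempty} =
        F '' (K ∩ PiNat.cylinder x k) := by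
      ext ω
      simp only [mem_ofPred_eq, mem_image, Set.Nonempty, mem_inter_iff, mem_preimage,
        mem_singleton_iff]
      exact exists_congr fun y => by tauto
    rw [this]
    exact ((hK.inter_right (isClosed_cylinder x k)).image hF).isClosed.measurableSet
  · rintro _ ⟨x, hx, rfl⟩
    exact (leftmost_mem (hK.isClosed.inter (isClosed_singleton.preimage hF)) ⟨x, hx, rfl⟩).2

theorem exists_measurable_ae_rightInverse (μ : Measure Ω) [IsFiniteMeasure μ] [μ.OuterRegular]
    {F : (ℕ → ℕ) → Ω} (hF : Continuous F) (hFs : Function.Surjective F) :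
    ∃ g : Ω → ℕ → ℕ, Measurable g ∧ ∀ᵐ ω ∂μ, F (g ω) = ω := by
  obtain ⟨K, hK, hnull⟩ := exists_isCompact_measure_range_diff_eq_zero μ hF
  choose s hs hsF using fun n => exists_measurable_rightInvOn_image hF (hK n)
  have hT : ∀ n, MeasurableSet (F '' K n) := fun n => ((hK n).image hF).isClosed.measurableSet
  obtain ⟨g, hg, hgs⟩ := exists_measurable_piecewise (disjointed fun n => F '' K n)
    (MeasurableSet.disjointed hT) s hs fun i j hij => by
      simp [(disjoint_disjointed (fun n => F '' K n) hij).inter_eq]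
  refine ⟨g, hg, ?_⟩
  have hcover : ∀ᵐ ω ∂μ, ω ∈ ⋃ n, F '' K n := by
    rwa [ae_iff, ← compl_def, compl_eq_univ_sdiff, ← hFs.range_eq]
  filter_upwards [hcover] with ω hω
  obtain ⟨n, hn⟩ := mem_iUnion.1 (iUnion_disjointed (f := fun n => F '' K n) ▸ hω)
  rw [hgs n hn]
  exact hsF n (disjointed_subset _ n hn)

end Selector

end MeasurableSelector

/-- Measurable selector theorem: if `f : Ω₂ → Ω₁` is a Borel measurable surjection
between standard Borel spaces and `P` is a probability measure on `Ω₁`, then there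
is a measurable map `g : Ω₁ → Ω₂` with `f (g ω) = ω` for `P`-a.e. `ω`. -/
theorem measurable_selector {Ω₁ Ω₂ : Type*}
    [MeasurableSpace Ω₁] [StandardBorelSpace Ω₁]
    [MeasurableSpace Ω₂] [StandardBorelSpace Ω₂]
    (P : Measure Ω₁) [IsProbabilityMeasure P]
    (f : Ω₂ → Ω₁) (hf : Measurable f) (hsurj : Function.Surjective f) :
    ∃ g : Ω₁ → Ω₂, Measurable g ∧ ∀ᵐ ω ∂P, f (g ω) = ω := by
  have := nonempty_of_isProbabilityMeasure P
  have := hsurj.nonempty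
  let := upgradeStandardBorel Ω₁
  let := upgradeStandardBorel Ω₂
  obtain ⟨t, ht, hft, htPolish⟩ := hf.exists_continuous
  obtain ⟨σ, hσ, hσs⟩ := @PolishSpace.exists_nat_nat_continuous_surjective Ω₂ t htPolish _
  have hσm : Measurable σ := by
    rw [eq_borel_upgradeStandardBorel Ω₂, BorelSpace.measurable_eq (α := ℕ → ℕ)]
    exact (@Continuous.borel_measurable _ _ _ t _ hσ).mono le_rfl (borel_anti ht)
  obtain ⟨g, hg, hfg⟩ :=
    MeasurableSelector.exists_measurable_ae_rightInverse P (hft.comp hσ) (hsurj.comp hσs)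
  exact ⟨σ ∘ g, hσm.comp hg, hfg⟩
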